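/- Let K be a number field, P ∈ K[X,Y] with p = deg_X P ≥ 1, q = deg_Y P ≥ 1, and A ∈ K[X,Y] with deg_X A ≤ n, deg_Y A ≤ q−1. Set r = max{p,q} and D(A) = (∂P/∂Y)(∂A/∂X) − (∂P/∂X)(∂A/∂Y). Then for every place v of K and every nonnegative integer s: |D^s(A)|_v ≤ δ_v(2(p+1)(q+1)r(n+rs))^s · |P|_v^s · |A|_v. -/

import Mathlib

open MvPolynomial

noncomputable section

/-- The sup of the `v`-adic absolute values of the coefficients of a polynomial,
`|P|_v`. -/
def polyNormAt {K : Type} [Field K] (v : AbsoluteValue K ℝ) {σ : Type}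
    (P : MvPolynomial σ K) : ℝ :=
  ((P.support.sup fun m => (⟨v (coeff m P), v.nonneg _⟩ : NNReal)) : NNReal)

/-- `v` is a place of `K`: its restriction to `ℚ` is the usual archimedean
absolute value, or it is non-archimedean and restricts to a `p`-adic absolute
value on `ℚ` with `|p|_v = 1/p`. -/
def IsPlace {K : Type} [Field K] (v : AbsoluteValue K ℝ) : Prop :=
  (∀ n : ℕ, v (n : K) = n) ∨
    (∃ p : ℕ, p.Prime ∧ (∀ x y : K, v (x + y) ≤ max (v x) (v y)) ∧
      v (p : K) = 1 / p)

/-- The differential operator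
`D(A) = (∂P/∂Y)(∂A/∂X) − (∂P/∂X)(∂A/∂Y)`. -/
def Dop {K : Type} [CommRing K] (P A : MvPolynomial (Fin 2) K) :
    MvPolynomial (Fin 2) K :=
  pderiv 1 P * pderiv 0 A - pderiv 0 P * pderiv 1 A


/-!
Write `δ_v(k) = max 1 |k|_v`. At a place, `δ_v` is monotone and multiplicative on positive
integers, and a sum of `k` terms of size at most `c` has size at most `δ_v(k) c` (at an
archimedean place by the triangle inequality, at a finite one by the ultrametric inequality).
Reading this off coefficientwise gives `|∂_i f|_v ≤ δ_v(deg_i f) |f|_v` and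
`|f g|_v ≤ δ_v(#supp f) |f|_v |g|_v`, so one application of `D` costs at most the factor
`δ_v(2 (p+1) (q+1) d e) |P|_v` when the partial degrees of `P` are at most `d` and those of
the argument at most `e`. Since `D` raises `deg_X` by at most `p` and `deg_Y` by at most `q`,
every `D^j A` with `j < s` has partial degrees at most `n + r s`, and the bound follows by
iterating.
-/

def deltaAt {K : Type} [Field K] (v : AbsoluteValue K ℝ) (k : ℕ) : ℝ :=
  max 1 (v k)

section Place

variable {K : Type} [Field K] {v : AbsoluteValue K ℝ}

theorem one_le_deltaAt (v : AbsoluteValue K ℝ) (k : ℕ) : 1 ≤ deltaAt v k :=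
  le_max_left _ _

theorem deltaAt_nonneg (v : AbsoluteValue K ℝ) (k : ℕ) : 0 ≤ deltaAt v k :=
  zero_le_one.trans (one_le_deltaAt v k)

namespace IsPlace

theorem deltaAt_eq (hv : IsPlace v) :
    (∀ k, deltaAt v k = max 1 (k : ℝ)) ∨ ∀ k, deltaAt v k = 1 := by
  rcases hv with harch | ⟨-, -, hna, -⟩
  · exact .inl fun k => by rw [deltaAt, harch]
  · exact .inr fun k => max_eq_left (IsNonarchimedean.apply_natCast_le_one (f := v) hna)

theorem deltaAt_mono (hv : IsPlace v) {a b : ℕ} (hab : a ≤ b) : deltaAt v a ≤ deltaAt v b := by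
  rcases hv.deltaAt_eq with h | h <;> simp only [h, le_refl]
  gcongr

theorem deltaAt_mul (hv : IsPlace v) {a b : ℕ} (ha : a ≠ 0) (hb : b ≠ 0) :
    deltaAt v (a * b) = deltaAt v a * deltaAt v b := by
  rcases hv.deltaAt_eq with h | h <;> simp only [h, mul_one]
  have ha' : (1 : ℝ) ≤ a := by exact_mod_cast Nat.one_le_iff_ne_zero.2 ha
  have hb' : (1 : ℝ) ≤ b := by exact_mod_cast Nat.one_le_iff_ne_zero.2 hb
  rw [max_eq_right ha', max_eq_right hb', max_eq_right (by push_cast; nlinarith)]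
  push_cast
  rfl

theorem apply_sum_le (hv : IsPlace v) {ι : Type*} (t : Finset ι) (f : ι → K) {c : ℝ}
    (hc : 0 ≤ c) (hf : ∀ i ∈ t, v (f i) ≤ c) : v (∑ i ∈ t, f i) ≤ deltaAt v t.card * c := by
  rcases hv with harch | ⟨-, -, hna, -⟩
  · calc v (∑ i ∈ t, f i) ≤ ∑ i ∈ t, v (f i) := v.sum_le _ _
      _ ≤ t.card * c := by simpa using Finset.sum_le_card_nsmul t _ c hf
      _ ≤ deltaAt v t.card * c := by
          rw [deltaAt, harch]
          gcongr
          exact le_max_right _ _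
  · refine le_trans ?_ (le_mul_of_one_le_left hc (one_le_deltaAt v _))
    rcases t.eq_empty_or_nonempty with rfl | ht
    · simpa using hc
    · exact (IsNonarchimedean.apply_sum_le_sup (f := v) hna ht).trans (Finset.sup'_le ht _ hf)

end IsPlace

end Place

section Degree

variable {R : Type} {σ : Type*}

theorem degreeOf_pderiv_le [CommSemiring R] (i j : σ) (f : MvPolynomial σ R) :
    degreeOf j (pderiv i f) ≤ degreeOf j f := by
  refine degreeOf_le_iff.2 fun m hm => ?_
  rw [mem_support_iff, coeff_pderiv] at hm
  calc m j ≤ (m + Finsupp.single i 1 : σ →₀ ℕ) j := by simp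
    _ ≤ degreeOf j f := monomial_le_degreeOf j (mem_support_iff.2 (left_ne_zero_of_mul hm))

theorem card_support_le_prod_degreeOf [CommSemiring R] [Fintype σ] [DecidableEq σ]
    (f : MvPolynomial σ R) : f.support.card ≤ ∏ i, (degreeOf i f + 1) := by
  calc f.support.card
      ≤ (Fintype.piFinset fun i => Finset.range (degreeOf i f + 1)).card :=
        Finset.card_le_card_of_injOn (fun m => ⇑m)
          (fun m hm => by simpa [Nat.lt_succ_iff] using fun i => monomial_le_degreeOf i hm)
          (fun _ _ _ _ h => DFunLike.coe_injective h)
    _ = ∏ i, (degreeOf i f + 1) := by simp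

theorem degreeOf_Dop_le [CommRing R] (i : Fin 2) (P B : MvPolynomial (Fin 2) R) :
    degreeOf i (Dop P B) ≤ degreeOf i P + degreeOf i B :=
  (degreeOf_sub_le i _ _).trans <| max_le
    ((degreeOf_mul_le i _ _).trans (add_le_add (degreeOf_pderiv_le _ _ _) (degreeOf_pderiv_le _ _ _)))
    ((degreeOf_mul_le i _ _).trans (add_le_add (degreeOf_pderiv_le _ _ _) (degreeOf_pderiv_le _ _ _)))

theorem degreeOf_iterate_Dop_le [CommRing R] (i : Fin 2) (P B : MvPolynomial (Fin 2) R) (j : ℕ) :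
    degreeOf i ((Dop P)^[j] B) ≤ degreeOf i B + j * degreeOf i P := by
  induction j with
  | zero => simp
  | succ j ih =>
    rw [Function.iterate_succ_apply', add_one_mul]
    have := degreeOf_Dop_le i P ((Dop P)^[j] B)
    omega

end Degree

section PolyNorm

variable {K : Type} [Field K] {v : AbsoluteValue K ℝ} {σ : Type}

theorem polyNormAt_nonneg (v : AbsoluteValue K ℝ) (f : MvPolynomial σ K) : 0 ≤ polyNormAt v f :=
  NNReal.coe_nonneg _

theorem apply_coeff_le_polyNormAt (v : AbsoluteValue K ℝ) (f : MvPolynomial σ K)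
    (m : σ →₀ ℕ) : v (coeff m f) ≤ polyNormAt v f := by
  by_cases h : m ∈ f.support
  · exact_mod_cast Finset.le_sup (f := fun m => (⟨v (coeff m f), v.nonneg _⟩ : NNReal)) h
  · rw [notMem_support_iff.mp h, map_zero]
    exact polyNormAt_nonneg v f

theorem polyNormAt_le {f : MvPolynomial σ K} {c : ℝ} (hc : 0 ≤ c)
    (h : ∀ m, v (coeff m f) ≤ c) : polyNormAt v f ≤ c := by
  have : (f.support.sup fun m => (⟨v (coeff m f), v.nonneg _⟩ : NNReal)) ≤ ⟨c, hc⟩ :=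
    Finset.sup_le fun m _ => by exact_mod_cast h m
  exact_mod_cast this

namespace IsPlace

theorem polyNormAt_sub_le (hv : IsPlace v) {f g : MvPolynomial σ K} {c : ℝ}
    (hf : polyNormAt v f ≤ c) (hg : polyNormAt v g ≤ c) :
    polyNormAt v (f - g) ≤ deltaAt v 2 * c := by
  have hc : 0 ≤ c := (polyNormAt_nonneg v f).trans hf
  refine polyNormAt_le (mul_nonneg (deltaAt_nonneg v 2) hc) fun m => ?_
  have := hv.apply_sum_le Finset.univ ![coeff m f, -coeff m g] hc <| by
    simpa [Fin.forall_fin_two] using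
      ⟨(apply_coeff_le_polyNormAt v f m).trans hf, (apply_coeff_le_polyNormAt v g m).trans hg⟩
  simpa [Fin.sum_univ_two, sub_eq_add_neg] using this

theorem polyNormAt_mul_le (hv : IsPlace v) (f g : MvPolynomial σ K) :
    polyNormAt v (f * g) ≤ deltaAt v f.support.card * (polyNormAt v f * polyNormAt v g) := by
  have hfg := mul_nonneg (polyNormAt_nonneg v f) (polyNormAt_nonneg v g)
  refine polyNormAt_le (mul_nonneg (deltaAt_nonneg v _) hfg) fun m => ?_
  conv_lhs => rw [f.as_sum, Finset.sum_mul, coeff_sum]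
  refine hv.apply_sum_le _ _ hfg fun a _ => ?_
  rw [coeff_monomial_mul']
  split_ifs
  · rw [map_mul]
    exact mul_le_mul (apply_coeff_le_polyNormAt v f a) (apply_coeff_le_polyNormAt v g _)
      (v.nonneg _) (polyNormAt_nonneg v f)
  · rw [map_zero]
    exact hfg

theorem polyNormAt_pderiv_le (hv : IsPlace v) (i : σ) (f : MvPolynomial σ K) :
    polyNormAt v (pderiv i f) ≤ deltaAt v (degreeOf i f) * polyNormAt v f := by
  refine polyNormAt_le (mul_nonneg (deltaAt_nonneg v _) (polyNormAt_nonneg v f)) fun m => ?_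
  rw [coeff_pderiv]
  by_cases h : coeff (m + Finsupp.single i 1) f = 0
  · rw [h, zero_mul, map_zero]
    exact mul_nonneg (deltaAt_nonneg v _) (polyNormAt_nonneg v f)
  have hdeg : m i + 1 ≤ degreeOf i f := by
    simpa using monomial_le_degreeOf i (mem_support_iff.2 h)
  have hfactor : v ((m i : K) + 1) ≤ deltaAt v (degreeOf i f) :=
    calc v ((m i : K) + 1) = v ((m i + 1 : ℕ) : K) := by push_cast; rfl
      _ ≤ deltaAt v (m i + 1) := le_max_right _ _
      _ ≤ deltaAt v (degreeOf i f) := hv.deltaAt_mono hdeg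
  rw [map_mul, mul_comm (deltaAt v _)]
  exact mul_le_mul (apply_coeff_le_polyNormAt v f _) hfactor (v.nonneg _) (polyNormAt_nonneg v f)

end IsPlace

end PolyNorm

theorem IsPlace.polyNormAt_Dop_le {K : Type} [Field K] {v : AbsoluteValue K ℝ} (hv : IsPlace v)
    {P B : MvPolynomial (Fin 2) K} {d e : ℕ} (hd : d ≠ 0) (he : e ≠ 0)
    (hP : ∀ i, degreeOf i P ≤ d) (hB : ∀ i, degreeOf i B ≤ e) :
    polyNormAt v (Dop P B) ≤
      deltaAt v (2 * (degreeOf 0 P + 1) * (degreeOf 1 P + 1) * d * e) *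
        (polyNormAt v P * polyNormAt v B) := by
  set k := (degreeOf 0 P + 1) * (degreeOf 1 P + 1)
  have hterm : ∀ i j, polyNormAt v (pderiv i P * pderiv j B) ≤
      deltaAt v k * deltaAt v d * deltaAt v e * (polyNormAt v P * polyNormAt v B) := by
    intro i j
    have hcard : (pderiv i P).support.card ≤ k := by
      refine (card_support_le_prod_degreeOf _).trans ?_
      rw [Fin.prod_univ_two]
      exact Nat.mul_le_mul (Nat.add_le_add_right (degreeOf_pderiv_le _ _ _) 1)
        (Nat.add_le_add_right (degreeOf_pderiv_le _ _ _) 1)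
    have hPi : polyNormAt v (pderiv i P) ≤ deltaAt v d * polyNormAt v P :=
      (hv.polyNormAt_pderiv_le i P).trans
        (mul_le_mul_of_nonneg_right (hv.deltaAt_mono (hP i)) (polyNormAt_nonneg v P))
    have hBj : polyNormAt v (pderiv j B) ≤ deltaAt v e * polyNormAt v B :=
      (hv.polyNormAt_pderiv_le j B).trans
        (mul_le_mul_of_nonneg_right (hv.deltaAt_mono (hB j)) (polyNormAt_nonneg v B))
    calc polyNormAt v (pderiv i P * pderiv j B)
        ≤ deltaAt v (pderiv i P).support.card *
            (polyNormAt v (pderiv i P) * polyNormAt v (pderiv j B)) := hv.polyNormAt_mul_le _ _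
      _ ≤ deltaAt v k * ((deltaAt v d * polyNormAt v P) * (deltaAt v e * polyNormAt v B)) :=
          mul_le_mul (hv.deltaAt_mono hcard)
            (mul_le_mul hPi hBj (polyNormAt_nonneg v _) ((polyNormAt_nonneg v _).trans hPi))
            (mul_nonneg (polyNormAt_nonneg v _) (polyNormAt_nonneg v _)) (deltaAt_nonneg v k)
      _ = deltaAt v k * deltaAt v d * deltaAt v e * (polyNormAt v P * polyNormAt v B) := by ring
  calc polyNormAt v (Dop P B)
      ≤ deltaAt v 2 * (deltaAt v k * deltaAt v d * deltaAt v e *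
          (polyNormAt v P * polyNormAt v B)) := hv.polyNormAt_sub_le (hterm 1 0) (hterm 0 1)
    _ = deltaAt v (2 * (degreeOf 0 P + 1) * (degreeOf 1 P + 1) * d * e) *
          (polyNormAt v P * polyNormAt v B) := by
      rw [mul_assoc 2, hv.deltaAt_mul (by positivity) he, hv.deltaAt_mul (by positivity) hd,
        hv.deltaAt_mul two_ne_zero (by positivity)]
      ring

theorem norm_iterated_D_general {K : Type} [Field K]
    (v : AbsoluteValue K ℝ) (hv : IsPlace v)
    (P : MvPolynomial (Fin 2) K) (p q n : ℕ)
    (hdp : P.degreeOf 0 = p) (hdq : P.degreeOf 1 = q)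
    (hp1 : 1 ≤ p)
    (A : MvPolynomial (Fin 2) K)
    (hAX : A.degreeOf 0 ≤ n) (hAY : A.degreeOf 1 ≤ q - 1) (s : ℕ) :
    polyNormAt v ((Dop P)^[s] A) ≤
      (max 1 (v ((2 * (p + 1) * (q + 1) * max p q * (n + max p q * s) : ℕ) : K))) ^ s *
        polyNormAt v P ^ s * polyNormAt v A := by
  set r := max p q
  have hdeg : ∀ j < s, ∀ i, degreeOf i ((Dop P)^[j] A) ≤ n + r * s := by
    intro j hj
    have hjp : j * p ≤ r * s := mul_comm r s ▸ Nat.mul_le_mul hj.le (le_max_left p q)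
    have hjq : (j + 1) * q ≤ r * s := mul_comm r s ▸ Nat.mul_le_mul hj (le_max_right p q)
    have h0 := degreeOf_iterate_Dop_le 0 P A j
    have h1 := degreeOf_iterate_Dop_le 1 P A j
    rw [hdp] at h0
    rw [hdq] at h1
    rw [add_one_mul] at hjq
    rw [Fin.forall_fin_two]
    omega
  have hstep : ∀ j < s, polyNormAt v ((Dop P)^[j + 1] A) ≤
      deltaAt v (2 * (p + 1) * (q + 1) * r * (n + r * s)) * polyNormAt v P *
        polyNormAt v ((Dop P)^[j] A) := by
    intro j hj
    have hr : 1 ≤ r := le_max_of_le_left hp1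
    have hP : ∀ i, degreeOf i P ≤ r := by
      rw [Fin.forall_fin_two, hdp, hdq]
      exact ⟨le_max_left p q, le_max_right p q⟩
    rw [Function.iterate_succ_apply', mul_assoc, ← hdp, ← hdq]
    exact hv.polyNormAt_Dop_le (by omega) (Nat.add_pos_right n (Nat.mul_pos hr (by omega))).ne' hP
      (hdeg j hj)
  have hgeom := le_geom (u := fun j => polyNormAt v ((Dop P)^[j] A))
    (mul_nonneg (deltaAt_nonneg v _) (polyNormAt_nonneg v P)) s hstep
  rwa [mul_pow] at hgeom

/-- Lemma 3.1, height bound: for every place `v` of `K`,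
`|D^s(A)|_v ≤ δ_v(2(p+1)(q+1)r(n+rs))^s |P|_v^s |A|_v` with `r = max{p,q}`. -/
theorem norm_iterated_D {K : Type} [Field K] [NumberField K]
    (v : AbsoluteValue K ℝ) (hv : IsPlace v)
    (P : MvPolynomial (Fin 2) K) (p q n : ℕ)
    (hdp : P.degreeOf 0 = p) (hdq : P.degreeOf 1 = q)
    (hp1 : 1 ≤ p) (hq1 : 1 ≤ q)
    (A : MvPolynomial (Fin 2) K)
    (hAX : A.degreeOf 0 ≤ n) (hAY : A.degreeOf 1 ≤ q - 1) (s : ℕ) :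
    polyNormAt v ((Dop P)^[s] A) ≤
      (max 1 (v ((2 * (p + 1) * (q + 1) * max p q * (n + max p q * s) : ℕ) : K))) ^ s *
        polyNormAt v P ^ s * polyNormAt v A :=
  norm_iterated_D_general v hv P p q n hdp hdq hp1 A hAX hAY s

end
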